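/- arXiv:2403.05891 — 5 statements merged into one kernel-verified Lean document; each statement's English description precedes it below -/
import Mathlib

section
/- (Proposition 3.1) Suppose M ≤ d and the snapshot matrix X ∈ ℂ^{d×M} admits an exact full-rank SVD X = U Σ Vᴴ, where U ∈ ℂ^{d×M} satisfies Uᴴ U = I_M, V ∈ ℂ^{M×M} is unitary, and Σ ∈ ℂ^{M×M} is invertible (so Xᴴ U = V Σ has rank M). Let K̃ = Uᴴ Y V Σ⁻¹ ∈ ℂ^{M×M} be the matrix produced by exact DMD with rank r = M. Then for every λ ∈ ℂ and v ∈ ℂ^M with K̃ᴴ v = λ v, one has (Yᴴ − λ Xᴴ) U v = 0; equivalently, the naive ResDMD residual numerator vᴴ[Uᴴ Y Yᴴ U − λ Uᴴ Y Xᴴ U − λ̄ Uᴴ X Yᴴ U + |λ|² Uᴴ X Xᴴ U] v vanishes. -/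
/-!
Writing `Uᴴ Y = K̃ Σ Vᴴ` (from `V Vᴴ = 1`) and `Xᴴ U = V Σᴴ` (from `Uᴴ U = 1`) gives
`(Yᴴ - λ Xᴴ) U = V Σᴴ (K̃ᴴ - λ)`, which kills every eigenvector `v` of `K̃ᴴ` with eigenvalue `λ`.
The naive residual matrix is the Gram matrix `Bᴴ B` of `B = (Yᴴ - λ Xᴴ) U`, so its quadratic
form at `v` is `‖B v‖² = 0`.
-/

open Matrix

namespace Matrix

variable {n m R : Type*} [Fintype n] [Fintype m]

theorem conjTranspose_mul_eq_of_eq_mul_mul_conjTranspose [DecidableEq m] [Semiring R] [StarRing R]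
    {X U : Matrix n m R} {S V : Matrix m m R} (hX : X = U * S * Vᴴ) (hU : Uᴴ * U = 1) :
    Xᴴ * U = V * Sᴴ := by
  rw [hX, conjTranspose_mul, conjTranspose_mul, conjTranspose_conjTranspose,
    Matrix.mul_assoc, Matrix.mul_assoc, hU, Matrix.mul_one]

theorem conjTranspose_mul_eq_of_eq_mul_mul_mul_inv [DecidableEq m] [CommRing R] [StarRing R]
    {Y U : Matrix n m R} {S V K : Matrix m m R} (hK : K = Uᴴ * Y * V * S⁻¹)
    (hV : V * Vᴴ = 1) (hS : IsUnit S.det) :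
    Yᴴ * U = V * Sᴴ * Kᴴ := by
  have hUY : Uᴴ * Y = K * S * Vᴴ := by
    rw [hK, Matrix.mul_assoc _ S⁻¹ S, nonsing_inv_mul S hS, Matrix.mul_one,
      Matrix.mul_assoc _ V Vᴴ, hV, Matrix.mul_one]
  simpa only [conjTranspose_mul, conjTranspose_conjTranspose, Matrix.mul_assoc]
    using congrArg conjTranspose hUY

theorem sub_smul_conjTranspose_mul_eq [DecidableEq m] [CommRing R] [StarRing R]
    {X Y U : Matrix n m R} {S V K : Matrix m m R} (l : R)
    (hXU : Xᴴ * U = V * Sᴴ) (hYU : Yᴴ * U = V * Sᴴ * Kᴴ) :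
    (Yᴴ - l • Xᴴ) * U = V * Sᴴ * (Kᴴ - l • 1) := by
  rw [Matrix.sub_mul, Matrix.smul_mul, hXU, hYU, Matrix.mul_sub, Matrix.mul_smul, Matrix.mul_one]

theorem residual_matrix_eq_conjTranspose_mul_self {𝕜 : Type*} [RCLike 𝕜]
    (X Y U : Matrix n m 𝕜) (l : 𝕜) :
    Uᴴ * Y * Yᴴ * U - l • (Uᴴ * Y * Xᴴ * U) - (starRingEnd 𝕜) l • (Uᴴ * X * Yᴴ * U)
        + ((‖l‖ ^ 2 : ℝ) : 𝕜) • (Uᴴ * X * Xᴴ * U)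
      = ((Yᴴ - l • Xᴴ) * U)ᴴ * ((Yᴴ - l • Xᴴ) * U) := by
  rw [RCLike.ofReal_pow, ← RCLike.conj_mul]
  simp only [conjTranspose_mul, conjTranspose_sub, conjTranspose_smul,
    conjTranspose_conjTranspose, Matrix.mul_sub, Matrix.sub_mul, Matrix.mul_smul,
    Matrix.smul_mul, Matrix.mul_assoc, RCLike.star_def]
  module

end Matrix

theorem prop_3_1_naive_residual_vanishes_general
    {d M : ℕ}
    (X Y U : Matrix (Fin d) (Fin M) ℂ)
    (V S : Matrix (Fin M) (Fin M) ℂ)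
    (hX : X = U * S * Vᴴ)
    (hU : Uᴴ * U = 1)
    (hV₂ : V * Vᴴ = 1)
    (hS : IsUnit S.det)
    (Ktil : Matrix (Fin M) (Fin M) ℂ)
    (hKtil : Ktil = Uᴴ * Y * V * S⁻¹)
    (l : ℂ) (v : Fin M → ℂ)
    (hv : Ktilᴴ *ᵥ v = l • v) :
    (Yᴴ - l • Xᴴ) *ᵥ (U *ᵥ v) = 0 ∧
      star v ⬝ᵥ ((Uᴴ * Y * Yᴴ * U - l • (Uᴴ * Y * Xᴴ * U)
          - (starRingEnd ℂ) l • (Uᴴ * X * Yᴴ * U)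
          + ((‖l‖ ^ 2 : ℝ) : ℂ) • (Uᴴ * X * Xᴴ * U)) *ᵥ v) = 0 := by
  have hB : (Yᴴ - l • Xᴴ) * U = V * Sᴴ * (Ktilᴴ - l • 1) :=
    sub_smul_conjTranspose_mul_eq l (conjTranspose_mul_eq_of_eq_mul_mul_conjTranspose hX hU)
      (conjTranspose_mul_eq_of_eq_mul_mul_mul_inv hKtil hV₂ hS)
  have hBv : ((Yᴴ - l • Xᴴ) * U) *ᵥ v = 0 := by
    rw [hB, ← mulVec_mulVec, sub_mulVec, hv, smul_mulVec, one_mulVec, sub_self, mulVec_zero]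
  refine ⟨by rwa [mulVec_mulVec], ?_⟩
  -- `erw`: the statement casts `‖l‖ ^ 2` by `Complex.ofReal`, the lemma by the defeq `RCLike.ofReal`.
  erw [residual_matrix_eq_conjTranspose_mul_self]
  rw [← mulVec_mulVec, hBv, mulVec_zero, dotProduct_zero]

/-- (Proposition 3.1) If `M ≤ d` and `X = U S Vᴴ` is an exact full-rank SVD, with
`K̃ = Uᴴ Y V S⁻¹` the exact-DMD matrix with rank `r = M`, then for every eigenpair
`(λ, v)` of `K̃ᴴ` the naive ResDMD residual vanishes. -/
theorem prop_3_1_naive_residual_vanishes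
    {d M : ℕ} (hMd : M ≤ d)
    (X Y U : Matrix (Fin d) (Fin M) ℂ)
    (V S : Matrix (Fin M) (Fin M) ℂ)
    (hX : X = U * S * Vᴴ)
    (hU : Uᴴ * U = 1)
    (hV₁ : Vᴴ * V = 1) (hV₂ : V * Vᴴ = 1)
    (hS : IsUnit S.det)
    (Ktil : Matrix (Fin M) (Fin M) ℂ)
    (hKtil : Ktil = Uᴴ * Y * V * S⁻¹)
    (l : ℂ) (v : Fin M → ℂ)
    (hv : Ktilᴴ *ᵥ v = l • v) :
    (Yᴴ - l • Xᴴ) *ᵥ (U *ᵥ v) = 0 ∧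
      star v ⬝ᵥ ((Uᴴ * Y * Yᴴ * U - l • (Uᴴ * Y * Xᴴ * U)
          - (starRingEnd ℂ) l • (Uᴴ * X * Yᴴ * U)
          + ((‖l‖ ^ 2 : ℝ) : ℂ) • (Uᴴ * X * Xᴴ * U)) *ᵥ v) = 0 :=
  prop_3_1_naive_residual_vanishes_general X Y U V S hX hU hV₂ hS Ktil hKtil l v hv
end

section
/- (Proposition of Section 4.2, vanishing of the naive kernelized residual) Suppose M ≤ N and Ŵ Ψ_X ∈ ℂ^{M×N} has rank M, with full SVD Ŵ Ψ_X = Q Σ Zᴴ, where Q ∈ ℂ^{M×M} is unitary, Z ∈ ℂ^{N×M} satisfies Zᴴ Z = I_M, and Σ ∈ ℂ^{M×M} is invertible and Hermitian (real diagonal). Let K̂ = Σ⁻¹ Qᴴ (Ŵ Ψ_Y)(Ŵ Ψ_X)ᴴ Q Σ⁻¹ ∈ ℂ^{M×M} be the kernelized EDMD matrix. Then for every eigenvalue–eigenvector pair (λ, v) of K̂ (i.e. K̂ v = λ v), one has Ŵ(Ψ_Y − λ Ψ_X) Z v = 0; in particular the naive kernelized ResDMD residual of (λ, v) with respect to the feature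 map Ψ Z vanishes. -/
/-!
Since `Ŵ Ψ_X = Q Σ Zᴴ` with `Zᴴ Z = I`, we get `Ŵ Ψ_X Z = Q Σ` and `(Ŵ Ψ_X)ᴴ Q Σ⁻¹ = Z`. Hence
`K̂ = Σ⁻¹ Qᴴ Ŵ Ψ_Y Z`, i.e. `(Q Σ) K̂ = Ŵ Ψ_Y Z`: the kernelized EDMD matrix is the matrix of
`Ŵ Ψ_Y Z` relative to `Q Σ = Ŵ Ψ_X Z`. An eigenpair `K̂ v = λ v` therefore gives
`Ŵ Ψ_Y Z v = λ Q Σ v = λ Ŵ Ψ_X Z v`, so the residual vanishes identically.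
-/

open Matrix

namespace Matrix

variable {m n R : Type*} [CommRing R]

theorem mul_eq_of_eq_mul_mul_conjTranspose [Fintype m] [Fintype n] [DecidableEq m] [StarRing R]
    {A : Matrix m n R} {Q S : Matrix m m R} {Z : Matrix n m R} (hA : A = Q * S * Zᴴ)
    (hZ : Zᴴ * Z = 1) : A * Z = Q * S := by
  rw [hA, Matrix.mul_assoc (Q * S), hZ, Matrix.mul_one]

theorem conjTranspose_mul_mul_inv_eq_of_eq_mul_mul_conjTranspose [Fintype m] [DecidableEq m]
    [StarRing R] {A : Matrix m n R} {Q S : Matrix m m R} {Z : Matrix n m R}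
    (hA : A = Q * S * Zᴴ) (hQ : Qᴴ * Q = 1) (hSH : Sᴴ = S) (hS : IsUnit S.det) :
    Aᴴ * Q * S⁻¹ = Z := by
  rw [hA, conjTranspose_mul, conjTranspose_mul, conjTranspose_conjTranspose, hSH]
  calc Z * (S * Qᴴ) * Q * S⁻¹ = Z * (S * (Qᴴ * Q) * S⁻¹) := by simp only [Matrix.mul_assoc]
    _ = Z := by rw [hQ, Matrix.mul_one, mul_nonsing_inv S hS, Matrix.mul_one]

theorem mul_mul_inv_mul_eq [Fintype m] [DecidableEq m] [StarRing R] {Q S : Matrix m m R}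
    (B : Matrix m n R) (hQ : Q * Qᴴ = 1) (hS : IsUnit S.det) : Q * S * (S⁻¹ * Qᴴ * B) = B := by
  calc Q * S * (S⁻¹ * Qᴴ * B) = Q * (S * S⁻¹) * Qᴴ * B := by simp only [Matrix.mul_assoc]
    _ = B := by rw [mul_nonsing_inv S hS, Matrix.mul_one, hQ, Matrix.one_mul]

theorem mulVec_eq_smul_mulVec_of_eq_mul [Fintype m] {C D : Matrix n m R} {K : Matrix m m R}
    (hD : D = C * K) {l : R} {v : m → R} (hv : K *ᵥ v = l • v) : D *ᵥ v = l • (C *ᵥ v) := by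
  rw [hD, ← mulVec_mulVec, hv, mulVec_smul]

end Matrix

theorem naive_kernelized_residual_vanishes_general
    {M N : ℕ}
    (PsiX PsiY : Matrix (Fin M) (Fin N) ℂ)
    (W Q S : Matrix (Fin M) (Fin M) ℂ)
    (Z : Matrix (Fin N) (Fin M) ℂ)
    (hSVD : W * PsiX = Q * S * Zᴴ)
    (hQ₁ : Qᴴ * Q = 1) (hQ₂ : Q * Qᴴ = 1)
    (hZ : Zᴴ * Z = 1)
    (hSH : Sᴴ = S) (hS : IsUnit S.det)
    (Khat : Matrix (Fin M) (Fin M) ℂ)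
    (hKhat : Khat = S⁻¹ * Qᴴ * (W * PsiY) * (W * PsiX)ᴴ * Q * S⁻¹)
    (l : ℂ) (v : Fin M → ℂ)
    (hv : Khat *ᵥ v = l • v) :
    (W * (PsiY - l • PsiX) * Z) *ᵥ v = 0 := by
  have hXZ : W * PsiX * Z = Q * S := mul_eq_of_eq_mul_mul_conjTranspose hSVD hZ
  have hKhat' : Khat = S⁻¹ * Qᴴ * (W * PsiY * Z) := by
    rw [hKhat, ← conjTranspose_mul_mul_inv_eq_of_eq_mul_mul_conjTranspose hSVD hQ₁ hSH hS]
    simp only [Matrix.mul_assoc]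
  have hYZ : W * PsiY * Z = Q * S * Khat := by
    rw [hKhat', mul_mul_inv_mul_eq _ hQ₂ hS]
  have hYv : (W * PsiY * Z) *ᵥ v = l • ((Q * S) *ᵥ v) :=
    mulVec_eq_smul_mulVec_of_eq_mul hYZ hv
  rw [Matrix.mul_sub, Matrix.sub_mul, Matrix.mul_smul, Matrix.smul_mul, sub_mulVec, hYv, hXZ,
    smul_mulVec, sub_self]

/-- (Section 4.2) If `M ≤ N` and `Ŵ Ψ_X` has rank `M` with full SVD `Ŵ Ψ_X = Q S Zᴴ`,
then for every eigenpair `(λ, v)` of the kernelized EDMD matrix `K̂`, the naive kernelized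
ResDMD residual with respect to the feature map `Ψ Z` vanishes: `Ŵ (Ψ_Y − λ Ψ_X) Z v = 0`. -/
theorem naive_kernelized_residual_vanishes
    {M N : ℕ} (hMN : M ≤ N)
    (PsiX PsiY : Matrix (Fin M) (Fin N) ℂ)
    (W Q S : Matrix (Fin M) (Fin M) ℂ)
    (Z : Matrix (Fin N) (Fin M) ℂ)
    (hrank : (W * PsiX).rank = M)
    (hSVD : W * PsiX = Q * S * Zᴴ)
    (hQ₁ : Qᴴ * Q = 1) (hQ₂ : Q * Qᴴ = 1)
    (hZ : Zᴴ * Z = 1)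
    (hSH : Sᴴ = S) (hS : IsUnit S.det)
    (Khat : Matrix (Fin M) (Fin M) ℂ)
    (hKhat : Khat = S⁻¹ * Qᴴ * (W * PsiY) * (W * PsiX)ᴴ * Q * S⁻¹)
    (l : ℂ) (v : Fin M → ℂ)
    (hv : Khat *ᵥ v = l • v) :
    (W * (PsiY - l • PsiX) * Z) *ᵥ v = 0 :=
  naive_kernelized_residual_vanishes_general PsiX PsiY W Q S Z hSVD hQ₁ hQ₂ hZ hSH hS Khat hKhat l v
    hv
end

section
/- (Proposition 4.1, eigenvalue correspondence for kernelized EDMD) Let Ŵ Ψ_X = Q Σ Zᴴ be an SVD, where Q ∈ ℂ^{M×M} is unitary, Z ∈ ℂ^{N×M} satisfies Zᴴ Z = I_M, and Σ = diag(σ₁,…,σ_M) with all σ_j real and nonnegative. Let Σ† = diag(σ₁†,…,σ_M†), where σ† = 1/σ if σ ≠ 0 and 0† = 0. Define the kernelized EDMD matrix K̂ = Σ† Qᴴ (Ŵ Ψ_Y)(Ŵ Ψ_X)ᴴ Q Σ† ∈ ℂ^{M×M} and the EDMD matrix K = Z Σ† Qᴴ (Ŵ Ψ_Y) ∈ ℂ^{N×N}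 (which equals (Ŵ Ψ_X)† Ŵ Ψ_Y). Then for every λ ∈ ℂ with λ ≠ 0 and every v ∈ ℂ^M: K̂ v = λ v if and only if K (Z v) = λ (Z v); moreover v ≠ 0 if and only if Z v ≠ 0, so (λ, v) is an eigenvalue–eigenvector pair of K̂ if and only if (λ, Z v) is an eigenvalue–eigenvector pair of K. -/
/-!
Write `Σ = diag σ`, `A = Σ† Qᴴ (Ŵ Ψ_Y)` and `P = Σ Σ†`, the orthogonal projection onto the
support of `σ`. Substituting the SVD, `(Ŵ Ψ_X)ᴴ Q Σ† = Z Σ Σ†`, so `K̂ = (A Z) P` and `K = Z A`.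
Since `P A = A`, every eigenvector of `A Z P` or of `A Z` for a nonzero eigenvalue lies in the
range of `P`, so the two matrices have the same such eigenpairs; and `Z` is an isometry, so
`(Z A) (Z v) = Z ((A Z) v)` equals `λ Z v` exactly when `(A Z) v = λ v`.
-/

open Matrix

section Eigenvector

variable {m n R : Type*} [Fintype m] [Fintype n]

section CommSemiring

variable [CommSemiring R]

theorem Matrix.mulVec_injective_of_mul_eq_one [DecidableEq m] {L : Matrix m n R}
    {Z : Matrix n m R} (hLZ : L * Z = 1) : Function.Injective (Z *ᵥ ·) := by
  intro v w hvw
  simpa only [mulVec_mulVec, hLZ, one_mulVec] using congrArg (L *ᵥ ·) hvw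

theorem Matrix.mul_mulVec_mulVec_eq_smul_iff [DecidableEq m] {L : Matrix m n R}
    {Z : Matrix n m R} (hLZ : L * Z = 1) (A : Matrix m n R) (l : R) (v : m → R) :
    (Z * A) *ᵥ (Z *ᵥ v) = l • (Z *ᵥ v) ↔ (A * Z) *ᵥ v = l • v := by
  rw [mulVec_mulVec, Matrix.mul_assoc, ← mulVec_mulVec, ← mulVec_smul]
  exact (mulVec_injective_of_mul_eq_one hLZ).eq_iff

end CommSemiring

variable [Field R]

theorem Matrix.mulVec_eq_self_of_mul_eq_self {P B : Matrix m m R} (hPB : P * B = B)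
    {l : R} (hl : l ≠ 0) {v : m → R} (hv : B *ᵥ v = l • v) : P *ᵥ v = v := by
  have : l • (P *ᵥ v) = l • v := by
    rw [← mulVec_smul, ← hv, mulVec_mulVec, hPB]
  exact smul_right_injective _ hl this

theorem Matrix.mul_mulVec_eq_smul_iff_of_mul_eq_self {P B : Matrix m m R} (hPB : P * B = B)
    {l : R} (hl : l ≠ 0) (v : m → R) :
    (B * P) *ᵥ v = l • v ↔ B *ᵥ v = l • v := by
  have hPBP : P * (B * P) = B * P := by rw [← Matrix.mul_assoc, hPB]
  constructor
  · intro h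
    have hPv := mulVec_eq_self_of_mul_eq_self hPBP hl h
    rwa [← mulVec_mulVec, hPv] at h
  · intro h
    rwa [← mulVec_mulVec, mulVec_eq_self_of_mul_eq_self hPB hl h]

end Eigenvector

theorem Matrix.diagonal_mul_diagonal_inv_mul_diagonal_inv {n K : Type*} [Fintype n]
    [DecidableEq n] [DivisionRing K] (d : n → K) :
    diagonal d * diagonal d⁻¹ * diagonal d⁻¹ = diagonal d⁻¹ := by
  simp only [diagonal_mul_diagonal]
  congr 1
  funext i
  by_cases hd : d i = 0 <;> simp [hd]

theorem kernelized_EDMD_eigenvalue_correspondence_general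
    {M N : ℕ}
    (PsiX PsiY : Matrix (Fin M) (Fin N) ℂ)
    (W Q : Matrix (Fin M) (Fin M) ℂ)
    (Z : Matrix (Fin N) (Fin M) ℂ)
    (σ : Fin M → ℝ)
    (hSVD : W * PsiX = Q * Matrix.diagonal (fun i => (σ i : ℂ)) * Zᴴ)
    (hQ₁ : Qᴴ * Q = 1)
    (hZ : Zᴴ * Z = 1)
    (Sdag : Matrix (Fin M) (Fin M) ℂ)
    (hSdag : Sdag = Matrix.diagonal (fun i => (((σ i)⁻¹ : ℝ) : ℂ)))
    (Khat : Matrix (Fin M) (Fin M) ℂ)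
    (hKhat : Khat = Sdag * Qᴴ * (W * PsiY) * (W * PsiX)ᴴ * Q * Sdag)
    (K : Matrix (Fin N) (Fin N) ℂ)
    (hK : K = Z * Sdag * Qᴴ * (W * PsiY))
    (l : ℂ) (hl : l ≠ 0) (v : Fin M → ℂ) :
    (Khat *ᵥ v = l • v ↔ K *ᵥ (Z *ᵥ v) = l • (Z *ᵥ v)) ∧
      (v ≠ 0 ↔ Z *ᵥ v ≠ 0) := by
  set A := Sdag * Qᴴ * (W * PsiY)
  set P := diagonal (fun i => (σ i : ℂ)) * Sdag
  have hSdag_inv : Sdag = diagonal (fun i => (σ i : ℂ))⁻¹ := by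
    rw [hSdag]; congr 1; funext i; simp
  have hPA : P * A = A := by
    simp only [P, A, ← Matrix.mul_assoc, hSdag_inv, diagonal_mul_diagonal_inv_mul_diagonal_inv]
  have hdiag_adj : (diagonal fun i => (σ i : ℂ))ᴴ = diagonal fun i => (σ i : ℂ) := by
    simp [diagonal_conjTranspose]
  have hKhat_eq : Khat = A * Z * P := by
    rw [hKhat, hSVD]
    simp only [conjTranspose_mul, conjTranspose_conjTranspose, hdiag_adj, A, P, Matrix.mul_assoc]
    rw [← Matrix.mul_assoc Qᴴ Q, hQ₁, Matrix.one_mul]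
  have hK_eq : K = Z * A := by simp only [hK, A, Matrix.mul_assoc]
  refine ⟨?_, ?_⟩
  · rw [hKhat_eq, hK_eq, mul_mulVec_mulVec_eq_smul_iff hZ,
      mul_mulVec_eq_smul_iff_of_mul_eq_self (by rw [← Matrix.mul_assoc, hPA]) hl]
  · exact ((mulVec_injective_of_mul_eq_one hZ).ne_iff' (mulVec_zero Z)).symm

/-- (Proposition 4.1) Eigenvalue correspondence for kernelized EDMD: for `λ ≠ 0`,
`(λ, v)` is an eigenpair of `K̂` if and only if `(λ, Z v)` is an eigenpair of `K`. -/
theorem kernelized_EDMD_eigenvalue_correspondence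
    {M N : ℕ}
    (PsiX PsiY : Matrix (Fin M) (Fin N) ℂ)
    (W Q : Matrix (Fin M) (Fin M) ℂ)
    (Z : Matrix (Fin N) (Fin M) ℂ)
    (σ : Fin M → ℝ) (hσ : ∀ i, 0 ≤ σ i)
    (hSVD : W * PsiX = Q * Matrix.diagonal (fun i => (σ i : ℂ)) * Zᴴ)
    (hQ₁ : Qᴴ * Q = 1) (hQ₂ : Q * Qᴴ = 1)
    (hZ : Zᴴ * Z = 1)
    (Sdag : Matrix (Fin M) (Fin M) ℂ)
    (hSdag : Sdag = Matrix.diagonal (fun i => (((σ i)⁻¹ : ℝ) : ℂ)))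
    (Khat : Matrix (Fin M) (Fin M) ℂ)
    (hKhat : Khat = Sdag * Qᴴ * (W * PsiY) * (W * PsiX)ᴴ * Q * Sdag)
    (K : Matrix (Fin N) (Fin N) ℂ)
    (hK : K = Z * Sdag * Qᴴ * (W * PsiY))
    (l : ℂ) (hl : l ≠ 0) (v : Fin M → ℂ) :
    (Khat *ᵥ v = l • v ↔ K *ᵥ (Z *ᵥ v) = l • (Z *ᵥ v)) ∧
      (v ≠ 0 ↔ Z *ᵥ v ≠ 0) :=
  kernelized_EDMD_eigenvalue_correspondence_general PsiX PsiY W Q Z σ hSVD hQ₁ hZ Sdag hSdag Khat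
    hKhat K hK l hl v
end

section
/- (Simplified residual for eigenpairs of exact DMD, Algorithm 2) Suppose U ∈ ℂ^{d×r} satisfies Uᴴ U = I_r and X V Σ⁻¹ = U, where V ∈ ℂ^{M×r} and Σ ∈ ℂ^{r×r} is invertible. Let K̃ = Uᴴ Y V Σ⁻¹ and L̃ = (Y V Σ⁻¹)ᴴ (Y V Σ⁻¹). If K̃ w = λ w for λ ∈ ℂ and w ∈ ℂ^r, then ‖Y V Σ⁻¹ w − λ X V Σ⁻¹ w‖² = wᴴ L̃ w − |λ|² ‖w‖²; hence for w ≠ 0 the ResDMD residual satisfies res(λ, w)² = (wᴴ L̃ w)/‖w‖² − |λ|². -/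
/-!
With `B = Y V Σ⁻¹` and `U = X V Σ⁻¹`, the eigen-equation `Uᴴ B w = λ w` says exactly that the
residual `r = B w − λ U w` is orthogonal to the range of `U`. Hence `‖r‖² = ⟪r, B w⟫
= ‖B w‖² − conj λ ⟪U w, B w⟫ = wᴴ L̃ w − |λ|² ‖w‖²`, using `Uᴴ U = 1` once more.
-/

open Matrix

/-- The Euclidean (ℓ²) norm of a complex vector. -/
noncomputable def vecEuclidNorm {n : ℕ} (x : Fin n → ℂ) : ℝ :=
  Real.sqrt (∑ i, ‖x i‖ ^ 2)

section Residual

variable {m n R : Type*} [Fintype m] [Fintype n]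

lemma star_mulVec_dotProduct_mulVec [CommSemiring R] [StarRing R] (A B : Matrix m n R)
    (v w : n → R) : star (A *ᵥ v) ⬝ᵥ (B *ᵥ w) = star v ⬝ᵥ ((Aᴴ * B) *ᵥ w) := by
  rw [star_mulVec, dotProduct_mulVec, vecMul_vecMul, ← dotProduct_mulVec]

lemma star_dotProduct_mulVec_eq_zero [CommSemiring R] [StarRing R] {A : Matrix m n R}
    {r : m → R} (hr : Aᴴ *ᵥ r = 0) (v : n → R) : star r ⬝ᵥ (A *ᵥ v) = 0 := by
  rw [dotProduct_mulVec, ← conjTranspose_conjTranspose A, ← star_mulVec, hr, star_zero,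
    zero_dotProduct]

variable [DecidableEq n] [CommRing R] [StarRing R] {U B : Matrix m n R} {l : R} {w : n → R}

lemma conjTranspose_mulVec_sub_smul_eq_zero (hU : Uᴴ * U = 1) (hw : (Uᴴ * B) *ᵥ w = l • w) :
    Uᴴ *ᵥ (B *ᵥ w - l • U *ᵥ w) = 0 := by
  rw [mulVec_sub, mulVec_smul, mulVec_mulVec, mulVec_mulVec, hw, hU, one_mulVec, sub_self]

lemma star_residual_dotProduct_residual (hU : Uᴴ * U = 1) (hw : (Uᴴ * B) *ᵥ w = l • w) :
    star (B *ᵥ w - l • U *ᵥ w) ⬝ᵥ (B *ᵥ w - l • U *ᵥ w) =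
      star w ⬝ᵥ ((Bᴴ * B) *ᵥ w) - l * star l * (star w ⬝ᵥ w) := by
  have horth : star (B *ᵥ w - l • U *ᵥ w) ⬝ᵥ (U *ᵥ w) = 0 :=
    star_dotProduct_mulVec_eq_zero (A := U) (conjTranspose_mulVec_sub_smul_eq_zero hU hw) w
  calc star (B *ᵥ w - l • U *ᵥ w) ⬝ᵥ (B *ᵥ w - l • U *ᵥ w)
      = star (B *ᵥ w - l • U *ᵥ w) ⬝ᵥ (B *ᵥ w) := by
        rw [dotProduct_sub, dotProduct_smul, horth, smul_zero, sub_zero]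
    _ = star (B *ᵥ w) ⬝ᵥ (B *ᵥ w) - star l * (star (U *ᵥ w) ⬝ᵥ (B *ᵥ w)) := by
        rw [star_sub, star_smul, sub_dotProduct, smul_dotProduct, smul_eq_mul]
    _ = star w ⬝ᵥ ((Bᴴ * B) *ᵥ w) - l * star l * (star w ⬝ᵥ w) := by
        rw [star_mulVec_dotProduct_mulVec, star_mulVec_dotProduct_mulVec, hw, dotProduct_smul,
          smul_eq_mul]
        ring

end Residual

lemma vecEuclidNorm_sq {n : ℕ} (x : Fin n → ℂ) :
    ((vecEuclidNorm x ^ 2 : ℝ) : ℂ) = star x ⬝ᵥ x := by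
  rw [vecEuclidNorm, Real.sq_sqrt (by positivity), Complex.ofReal_sum]
  refine Finset.sum_congr rfl fun i _ => ?_
  rw [Pi.star_apply, Complex.star_def, Complex.conj_mul', Complex.ofReal_pow]

open scoped ComplexOrder in
lemma vecEuclidNorm_ne_zero {n : ℕ} {x : Fin n → ℂ} (hx : x ≠ 0) : vecEuclidNorm x ≠ 0 := by
  intro h
  apply hx
  rw [← dotProduct_star_self_eq_zero, ← vecEuclidNorm_sq, h]
  simp

theorem exact_DMD_simplified_residual_general
    {d M r : ℕ}
    (X Y : Matrix (Fin d) (Fin M) ℂ)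
    (U : Matrix (Fin d) (Fin r) ℂ)
    (V : Matrix (Fin M) (Fin r) ℂ)
    (S : Matrix (Fin r) (Fin r) ℂ)
    (hU : Uᴴ * U = 1)
    (hXVS : X * V * S⁻¹ = U)
    (Ktil : Matrix (Fin r) (Fin r) ℂ) (hKtil : Ktil = Uᴴ * Y * V * S⁻¹)
    (Ltil : Matrix (Fin r) (Fin r) ℂ)
    (hLtil : Ltil = (Y * V * S⁻¹)ᴴ * (Y * V * S⁻¹))
    (l : ℂ) (w : Fin r → ℂ)
    (hw : Ktil *ᵥ w = l • w) :
    ((vecEuclidNorm ((Y * V * S⁻¹) *ᵥ w - l • ((X * V * S⁻¹) *ᵥ w)) ^ 2 : ℝ) : ℂ) =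
        star w ⬝ᵥ (Ltil *ᵥ w) - ((‖l‖ ^ 2 : ℝ) : ℂ) * ((vecEuclidNorm w ^ 2 : ℝ) : ℂ) ∧
      (w ≠ 0 →
        ((((vecEuclidNorm ((Y * V * S⁻¹) *ᵥ w - l • ((X * V * S⁻¹) *ᵥ w)) / vecEuclidNorm w) ^ 2 : ℝ)) : ℂ) =
          star w ⬝ᵥ (Ltil *ᵥ w) / ((vecEuclidNorm w ^ 2 : ℝ) : ℂ) - ((‖l‖ ^ 2 : ℝ) : ℂ)) := by
  have hcompress : (Uᴴ * (Y * V * S⁻¹)) *ᵥ w = l • w := by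
    rw [← hw, hKtil]
    simp only [Matrix.mul_assoc]
  have hresidual_sq : ((vecEuclidNorm ((Y * V * S⁻¹) *ᵥ w - l • ((X * V * S⁻¹) *ᵥ w)) ^ 2 : ℝ) : ℂ) =
      star w ⬝ᵥ (Ltil *ᵥ w) - ((‖l‖ ^ 2 : ℝ) : ℂ) * ((vecEuclidNorm w ^ 2 : ℝ) : ℂ) := by
    rw [vecEuclidNorm_sq, vecEuclidNorm_sq, hXVS, star_residual_dotProduct_residual hU hcompress,
      hLtil, Complex.ofReal_pow, ← Complex.mul_conj', Complex.star_def]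
  refine ⟨hresidual_sq, fun hw0 => ?_⟩
  have hnorm : ((vecEuclidNorm w ^ 2 : ℝ) : ℂ) ≠ 0 := by
    exact_mod_cast pow_ne_zero 2 (vecEuclidNorm_ne_zero hw0)
  rw [div_pow, Complex.ofReal_div, hresidual_sq, sub_div, mul_div_cancel_right₀ _ hnorm]

/-- (Simplified residual for eigenpairs of exact DMD, Algorithm 2.) If `K̃ w = λ w`, then
`‖Y V Σ⁻¹ w − λ X V Σ⁻¹ w‖² = wᴴ L̃ w − |λ|² ‖w‖²`; hence for `w ≠ 0` the ResDMD residual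
satisfies `res(λ,w)² = (wᴴ L̃ w)/‖w‖² − |λ|²`. -/
theorem exact_DMD_simplified_residual
    {d M r : ℕ}
    (X Y : Matrix (Fin d) (Fin M) ℂ)
    (U : Matrix (Fin d) (Fin r) ℂ)
    (V : Matrix (Fin M) (Fin r) ℂ)
    (S : Matrix (Fin r) (Fin r) ℂ)
    (hS : IsUnit S.det)
    (hU : Uᴴ * U = 1)
    (hXVS : X * V * S⁻¹ = U)
    (Ktil : Matrix (Fin r) (Fin r) ℂ) (hKtil : Ktil = Uᴴ * Y * V * S⁻¹)
    (Ltil : Matrix (Fin r) (Fin r) ℂ)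
    (hLtil : Ltil = (Y * V * S⁻¹)ᴴ * (Y * V * S⁻¹))
    (l : ℂ) (w : Fin r → ℂ)
    (hw : Ktil *ᵥ w = l • w) :
    ((vecEuclidNorm ((Y * V * S⁻¹) *ᵥ w - l • ((X * V * S⁻¹) *ᵥ w)) ^ 2 : ℝ) : ℂ) =
        star w ⬝ᵥ (Ltil *ᵥ w) - ((‖l‖ ^ 2 : ℝ) : ℂ) * ((vecEuclidNorm w ^ 2 : ℝ) : ℂ) ∧
      (w ≠ 0 →
        ((((vecEuclidNorm ((Y * V * S⁻¹) *ᵥ w - l • ((X * V * S⁻¹) *ᵥ w)) / vecEuclidNorm w) ^ 2 : ℝ)) : ℂ) =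
          star w ⬝ᵥ (Ltil *ᵥ w) / ((vecEuclidNorm w ^ 2 : ℝ) : ℂ) - ((‖l‖ ^ 2 : ℝ) : ℂ)) :=
  exact_DMD_simplified_residual_general X Y U V S hU hXVS Ktil hKtil Ltil hLtil l w hw
end

section
/- (K̂ᴴ solves the kernelized dual least-squares problem (4.2)) Suppose Q̂ ∈ ℂ^{M×r} with Q̂ᴴ Q̂ = I_r, Ẑ ∈ ℂ^{N×r} with Ẑᴴ Ẑ = I_r, and Σ̂ ∈ ℂ^{r×r} invertible and Hermitian satisfy (Ŵ Ψ_X)ᴴ Q̂ = Ẑ Σ̂. Define Ψ̂_X = (Ŵ Ψ_X)ᴴ Q̂ Σ̂⁻¹, Ψ̂_Y = (Ŵ Ψ_Y)ᴴ Q̂ Σ̂⁻¹ ∈ ℂ^{N×r}, and K̂ = Σ̂⁻¹ Q̂ᴴ (Ŵ Ψ_Y)(Ŵ Ψ_X)ᴴ Q̂ Σ̂⁻¹ ∈ ℂ^{r×r}. Then K̂ᴴ is a solution of min over M' ∈ ℂ^{r×r} of ‖Ψ̂_Y − Ψ̂_X M'‖_F; that is, for every M' ∈ ℂ^{r×r},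 ‖Ψ̂_Y − Ψ̂_X K̂ᴴ‖_F ≤ ‖Ψ̂_Y − Ψ̂_X M'‖_F. -/
/-!
The relation `(Ŵ Ψ_X)ᴴ Q̂ = Ẑ Σ̂` with `Σ̂` invertible gives `Ψ̂_X = Ẑ`, a matrix with orthonormal
columns, and, `Σ̂` being Hermitian, `K̂ᴴ = Ẑᴴ Ψ̂_Y`. Hence `Ψ̂_X K̂ᴴ = Ẑ Ẑᴴ Ψ̂_Y` is the orthogonal
projection of `Ψ̂_Y` onto the column space of `Ẑ`: the residual is orthogonal to that space, and
Pythagoras for the Frobenius norm shows that any other `Ẑ M'` leaves a residual at least as large.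
-/

open Matrix

/-- The Frobenius norm of a complex matrix. -/
noncomputable def fro {m n : ℕ} (A : Matrix (Fin m) (Fin n) ℂ) : ℝ :=
  Real.sqrt (∑ i, ∑ j, ‖A i j‖ ^ 2)

theorem fro_sq {m n : ℕ} (A : Matrix (Fin m) (Fin n) ℂ) : fro A ^ 2 = (Aᴴ * A).trace.re := by
  rw [fro, Real.sq_sqrt (by positivity), Finset.sum_comm]
  simp [Matrix.trace, Matrix.mul_apply, Complex.re_sum, ← Complex.normSq_eq_norm_sq,
    Complex.normSq_apply, mul_comm]

theorem fro_add_sq_of_conjTranspose_mul_eq_zero {m n : ℕ} {A C : Matrix (Fin m) (Fin n) ℂ}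
    (h : Aᴴ * C = 0) : fro (A + C) ^ 2 = fro A ^ 2 + fro C ^ 2 := by
  have h' : Cᴴ * A = 0 := by rw [← conjTranspose_conjTranspose A, ← conjTranspose_mul, h,
    conjTranspose_zero]
  simp only [fro_sq, conjTranspose_add, Matrix.add_mul, Matrix.mul_add, h, h', add_zero,
    zero_add, trace_add, Complex.add_re]

theorem fro_le_fro_add_of_conjTranspose_mul_eq_zero {m n : ℕ} {A C : Matrix (Fin m) (Fin n) ℂ}
    (h : Aᴴ * C = 0) : fro A ≤ fro (A + C) := by
  refine le_of_pow_le_pow_left₀ two_ne_zero (Real.sqrt_nonneg _) ?_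
  rw [fro_add_sq_of_conjTranspose_mul_eq_zero h]
  exact le_add_of_nonneg_right (sq_nonneg _)

theorem fro_sub_mul_conjTranspose_mul_le {n r k : ℕ} {Z : Matrix (Fin n) (Fin r) ℂ}
    (hZ : Zᴴ * Z = 1) (Y : Matrix (Fin n) (Fin k) ℂ) (B : Matrix (Fin r) (Fin k) ℂ) :
    fro (Y - Z * (Zᴴ * Y)) ≤ fro (Y - Z * B) := by
  have hres : (Y - Z * (Zᴴ * Y))ᴴ * Z = 0 := by
    rw [conjTranspose_sub, Matrix.sub_mul, conjTranspose_mul, Matrix.mul_assoc, conjTranspose_mul,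
      conjTranspose_conjTranspose, Matrix.mul_assoc, hZ, Matrix.mul_one, sub_self]
  have hsplit : Y - Z * B = (Y - Z * (Zᴴ * Y)) + Z * (Zᴴ * Y - B) := by
    rw [Matrix.mul_sub]; abel
  rw [hsplit]
  refine fro_le_fro_add_of_conjTranspose_mul_eq_zero ?_
  rw [← Matrix.mul_assoc, hres, Matrix.zero_mul]

theorem kernelized_dual_least_squares_general
    {M N r : ℕ}
    (PsiX PsiY : Matrix (Fin M) (Fin N) ℂ)
    (W : Matrix (Fin M) (Fin M) ℂ)
    (Qh : Matrix (Fin M) (Fin r) ℂ)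
    (Zh : Matrix (Fin N) (Fin r) ℂ) (hZ : Zhᴴ * Zh = 1)
    (Sh : Matrix (Fin r) (Fin r) ℂ) (hSH : Shᴴ = Sh) (hS : IsUnit Sh.det)
    (hSVD : (W * PsiX)ᴴ * Qh = Zh * Sh)
    (PsihX PsihY : Matrix (Fin N) (Fin r) ℂ)
    (hPsihX : PsihX = (W * PsiX)ᴴ * Qh * Sh⁻¹)
    (hPsihY : PsihY = (W * PsiY)ᴴ * Qh * Sh⁻¹)
    (Khat : Matrix (Fin r) (Fin r) ℂ)
    (hKhat : Khat = Sh⁻¹ * Qhᴴ * (W * PsiY) * (W * PsiX)ᴴ * Qh * Sh⁻¹) :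
    ∀ M' : Matrix (Fin r) (Fin r) ℂ,
      fro (PsihY - PsihX * Khatᴴ) ≤ fro (PsihY - PsihX * M') := by
  intro M'
  have hSinvH : Sh⁻¹ᴴ = Sh⁻¹ := by rw [conjTranspose_nonsing_inv, hSH]
  have hX : PsihX = Zh := by
    rw [hPsihX, hSVD, Matrix.mul_assoc, mul_nonsing_inv Sh hS, Matrix.mul_one]
  have hK : Khatᴴ = Zhᴴ * PsihY := by
    rw [← hX, hPsihX, hKhat, hPsihY]
    simp only [conjTranspose_mul, conjTranspose_conjTranspose, hSinvH, Matrix.mul_assoc]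
  rw [hK, hX]
  exact fro_sub_mul_conjTranspose_mul_le hZ PsihY M'

/-- (`K̂ᴴ` solves the kernelized dual least-squares problem (4.2).) For every
`M' ∈ ℂ^{r×r}`, `‖Ψ̂_Y − Ψ̂_X K̂ᴴ‖_F ≤ ‖Ψ̂_Y − Ψ̂_X M'‖_F`. -/
theorem kernelized_dual_least_squares
    {M N r : ℕ}
    (PsiX PsiY : Matrix (Fin M) (Fin N) ℂ)
    (W : Matrix (Fin M) (Fin M) ℂ)
    (Qh : Matrix (Fin M) (Fin r) ℂ) (hQ : Qhᴴ * Qh = 1)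
    (Zh : Matrix (Fin N) (Fin r) ℂ) (hZ : Zhᴴ * Zh = 1)
    (Sh : Matrix (Fin r) (Fin r) ℂ) (hSH : Shᴴ = Sh) (hS : IsUnit Sh.det)
    (hSVD : (W * PsiX)ᴴ * Qh = Zh * Sh)
    (PsihX PsihY : Matrix (Fin N) (Fin r) ℂ)
    (hPsihX : PsihX = (W * PsiX)ᴴ * Qh * Sh⁻¹)
    (hPsihY : PsihY = (W * PsiY)ᴴ * Qh * Sh⁻¹)
    (Khat : Matrix (Fin r) (Fin r) ℂ)
    (hKhat : Khat = Sh⁻¹ * Qhᴴ * (W * PsiY) * (W * PsiX)ᴴ * Qh * Sh⁻¹) :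
    ∀ M' : Matrix (Fin r) (Fin r) ℂ,
      fro (PsihY - PsihX * Khatᴴ) ≤ fro (PsihY - PsihX * M') :=
  kernelized_dual_least_squares_general PsiX PsiY W Qh Zh hZ Sh hSH hS hSVD PsihX PsihY hPsihX
    hPsihY Khat hKhat
end
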